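/- Let G be a connected graph on p vertices with every vertex of eccentricity greater than 1, and suppose the complement Ḡ is also connected. Then W_ε(G) + W_ε(Ḡ) ≤ (1/2)·((p-1)(ε*(G) + ε*(Ḡ)) − (ζ(G) + ζ(Ḡ))). -/

import Mathlib

open Finset

namespace EccPaper

variable {V : Type*}

noncomputable def ecc [Fintype V] (G : SimpleGraph V) (v : V) : ℕ :=
  Finset.univ.sup (fun u => G.dist v u)

noncomputable def graphDiam [Fintype V] (G : SimpleGraph V) : ℕ :=
  Finset.univ.sup (fun v => ecc G v)

noncomputable def eccMatR [Fintype V] (G : SimpleGraph V) : Matrix V V ℝ :=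
  fun u v => if G.dist u v = min (ecc G u) (ecc G v) then (G.dist u v : ℝ) else 0

noncomputable def eccWiener [Fintype V] (G : SimpleGraph V) : ℝ :=
  (∑ u, ∑ v, eccMatR G u v) / 2

noncomputable def totalEcc [Fintype V] (G : SimpleGraph V) : ℝ :=
  ∑ v, (ecc G v : ℝ)

noncomputable def eccConnIndex [Fintype V] (G : SimpleGraph V) [DecidableRel G.Adj] : ℝ :=
  ∑ v, (G.degree v : ℝ) * (ecc G v : ℝ)

lemma eccMatR_isHermitian [Fintype V] (G : SimpleGraph V) : (eccMatR G).IsHermitian := by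
  ext i j
  simp only [eccMatR, Matrix.conjTranspose_apply, starRingEnd_apply, star_trivial]
  rw [SimpleGraph.dist_comm, min_comm]

noncomputable def eccEnergy [Fintype V] [DecidableEq V] (G : SimpleGraph V) : ℝ :=
  ∑ i, |(eccMatR_isHermitian G).eigenvalues i|

noncomputable def eccSpecRadius [Fintype V] [DecidableEq V] (G : SimpleGraph V) : ℝ :=
  ⨆ i, |(eccMatR_isHermitian G).eigenvalues i|

def eccGraph [Fintype V] (G : SimpleGraph V) : SimpleGraph V where
  Adj u v := u ≠ v ∧ G.dist u v = min (ecc G u) (ecc G v)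
  symm := by
    constructor
    rintro u v ⟨h1, h2⟩
    exact ⟨h1.symm, by rwa [SimpleGraph.dist_comm, min_comm]⟩
  loopless := ⟨fun v h => h.1 rfl⟩

def IsIrreducible [Fintype V] (M : Matrix V V ℝ) : Prop :=
  ¬ ∃ S : Set V, S.Nonempty ∧ S ≠ Set.univ ∧ ∀ i ∈ S, ∀ j ∉ S, M i j = 0

def centralGraph [DecidableEq V] (G : SimpleGraph V) [DecidableRel G.Adj] :
    SimpleGraph (V ⊕ G.edgeSet) where
  Adj x y :=
    match x, y with
    | Sum.inl u, Sum.inl v => u ≠ v ∧ ¬ G.Adj u v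
    | Sum.inl u, Sum.inr e => u ∈ (e : Sym2 V)
    | Sum.inr e, Sum.inl u => u ∈ (e : Sym2 V)
    | Sum.inr _, Sum.inr _ => False
  symm := by
    constructor
    rintro (u | e) (v | f) h
    · exact ⟨h.1.symm, fun hadj => h.2 hadj.symm⟩
    · exact h
    · exact h
    · exact h
  loopless := by
    constructor
    rintro (u | e) h
    · exact h.1 rfl
    · exact h

/-!
Every entry of row `u` of the eccentricity matrix is at most `e(u)`, and the entries at `v = u`
and at the neighbours `v` of `u` vanish, since there `d(u,v) ≤ 1 < min (e(u), e(v))`. Hence row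
`u` sums to at most `(p - 1 - deg u) e(u)`, and summing over `u` gives
`2 W_ε(G) ≤ (p - 1) ε*(G) - ζ(G)`. The same bound holds for `Ḡ`: a `G`-neighbour of `v` is not
adjacent to `v` in the connected graph `Ḡ`, so `e_Ḡ(v) ≥ 2`.
-/

section Eccentricity

variable [Fintype V] {G : SimpleGraph V}

lemma dist_le_ecc (v u : V) : G.dist v u ≤ ecc G v :=
  Finset.le_sup (Finset.mem_univ u)

lemma exists_adj_of_ecc_pos {v : V} (h : 0 < ecc G v) : ∃ w, G.Adj v w := by
  obtain ⟨u, -, hu⟩ := Finset.lt_sup_iff.mp h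
  obtain ⟨p⟩ := SimpleGraph.nonempty_of_pos_dist hu
  cases p with
  | nil => simp at hu
  | cons hadj _ => exact ⟨_, hadj⟩

lemma one_lt_ecc_compl [DecidableEq V] (hcc : Gᶜ.Connected) {v : V} (h : 0 < ecc G v) :
    1 < ecc Gᶜ v := by
  obtain ⟨w, hw⟩ := exists_adj_of_ecc_pos h
  have hnadj : ¬ Gᶜ.Adj v w := fun hc => hc.2 hw
  exact (hcc.one_lt_dist_of_ne_of_not_adj hw.ne hnadj).trans_le (dist_le_ecc v w)

lemma eccMatR_le_ecc_left (u v : V) : eccMatR G u v ≤ ecc G u := by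
  unfold eccMatR
  split_ifs with h
  · exact_mod_cast h ▸ min_le_left _ _
  · positivity

lemma eccMatR_eq_zero_of_dist_lt {u v : V} (h : G.dist u v < min (ecc G u) (ecc G v)) :
    eccMatR G u v = 0 :=
  if_neg h.ne

lemma sum_eccMatR_row_le [DecidableEq V] [DecidableRel G.Adj] (hecc : ∀ v, 1 < ecc G v) (u : V) :
    ∑ v, eccMatR G u v ≤ Gᶜ.degree u * ecc G u := by
  have hclosed : ∀ v ∈ univ, v ∉ Gᶜ.neighborFinset u → eccMatR G u v = 0 := by
    intro v _ hv
    have hdist : G.dist u v ≤ 1 := by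
      rcases eq_or_ne u v with rfl | hne
      · simp
      · have hadj : G.Adj u v := by simpa [SimpleGraph.compl_adj, hne] using hv
        exact (SimpleGraph.dist_eq_one_iff_adj.mpr hadj).le
    exact eccMatR_eq_zero_of_dist_lt (hdist.trans_lt (lt_min (hecc u) (hecc v)))
  rw [← Finset.sum_subset (Finset.subset_univ _) hclosed]
  calc ∑ v ∈ Gᶜ.neighborFinset u, eccMatR G u v
      ≤ (Gᶜ.neighborFinset u).card • (ecc G u : ℝ) :=
        Finset.sum_le_card_nsmul _ _ _ fun v _ => eccMatR_le_ecc_left u v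
    _ = Gᶜ.degree u * ecc G u := by
        rw [SimpleGraph.card_neighborFinset_eq_degree, nsmul_eq_mul]

lemma degree_compl_cast [DecidableEq V] [DecidableRel G.Adj] (u : V) :
    (Gᶜ.degree u : ℝ) = Fintype.card V - 1 - G.degree u := by
  have hlt := G.degree_lt_card_verts u
  have hsum : Gᶜ.degree u + G.degree u + 1 = Fintype.card V := by
    rw [SimpleGraph.degree_compl]
    omega
  rw [← hsum]
  push_cast
  ring

lemma eccWiener_le [DecidableEq V] [DecidableRel G.Adj] (hecc : ∀ v, 1 < ecc G v) :
    eccWiener G ≤ (((Fintype.card V : ℝ) - 1) * totalEcc G - eccConnIndex G) / 2 := by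
  have hrows : ∑ u, ∑ v, eccMatR G u v ≤ ∑ u, (Gᶜ.degree u : ℝ) * ecc G u :=
    Finset.sum_le_sum fun u _ => sum_eccMatR_row_le hecc u
  have hsum : ∑ u, (Gᶜ.degree u : ℝ) * ecc G u =
      ((Fintype.card V : ℝ) - 1) * totalEcc G - eccConnIndex G := by
    simp only [degree_compl_cast, totalEcc, eccConnIndex, Finset.mul_sum, ← Finset.sum_sub_distrib,
      sub_mul]
  unfold eccWiener
  linarith

end Eccentricity

theorem stmt_11_general {V : Type*} [Fintype V] [DecidableEq V] (G : SimpleGraph V) [DecidableRel G.Adj]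
    (hecc : ∀ v : V, 1 < ecc G v) (hcc : Gᶜ.Connected) :
    eccWiener G + eccWiener Gᶜ ≤
      (((Fintype.card V : ℝ) - 1) * (totalEcc G + totalEcc Gᶜ) -
        (eccConnIndex G + eccConnIndex Gᶜ)) / 2 := by
  have hecc_compl : ∀ v, 1 < ecc Gᶜ v := fun v => one_lt_ecc_compl hcc (zero_lt_one.trans (hecc v))
  linarith [eccWiener_le hecc, eccWiener_le hecc_compl]

/-- Nordhaus–Gaddum type bound for the eccentricity Wiener index. -/
theorem stmt_11 {V : Type*} [Fintype V] [DecidableEq V] (G : SimpleGraph V) [DecidableRel G.Adj]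
    (hconn : G.Connected) (hecc : ∀ v : V, 1 < ecc G v) (hcc : Gᶜ.Connected) :
    eccWiener G + eccWiener Gᶜ ≤
      (((Fintype.card V : ℝ) - 1) * (totalEcc G + totalEcc Gᶜ) -
        (eccConnIndex G + eccConnIndex Gᶜ)) / 2 :=
  stmt_11_general G hecc hcc
end EccPaper
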